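/- In the 3-stack word of any permutation, there is no factor BB, no factor CC, no factor BAB, and no factor of the form C B A^j C for any j ≥ 0. -/

import Mathlib

set_option linter.unusedVariables false

inductive Move | A | B | C | D
deriving DecidableEq, Repr

structure Config where
  input : List ℕ
  s1 : List ℕ
  s2 : List ℕ
  s3 : List ℕ
  out : List ℕ

def canA (c : Config) : Bool :=
  match c.input, c.s1 with
  | x :: _, [] => true
  | x :: _, t :: _ => decide (x < t)
  | [], _ => false

def canB (c : Config) : Bool :=
  match c.s1, c.s2 with
  | x :: _, [] => true
  | x :: _, t :: _ => decide (x < t)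
  | [], _ => false

def canC (c : Config) : Bool :=
  match c.s2, c.s3 with
  | x :: _, [] => true
  | x :: _, t :: _ => decide (x < t)
  | [], _ => false

def canD (c : Config) : Bool := !c.s3.isEmpty

def doA (c : Config) : Config :=
  { c with input := c.input.tail, s1 := c.input.headD 0 :: c.s1 }
def doB (c : Config) : Config :=
  { c with s1 := c.s1.tail, s2 := c.s1.headD 0 :: c.s2 }
def doC (c : Config) : Config :=
  { c with s2 := c.s2.tail, s3 := c.s2.headD 0 :: c.s3 }
def doD (c : Config) : Config :=
  { c with s3 := c.s3.tail, out := c.out ++ [c.s3.headD 0] }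

/-- One step of the greedy (priority `A > B > C > D`) 3-stack sorting algorithm:
`A` = input→S₁, `B` = S₁→S₂, `C` = S₂→S₃, `D` = S₃→output. -/
def step (c : Config) : Option (Move × Config) :=
  if canA c then some (.A, doA c)
  else if canB c then some (.B, doB c)
  else if canC c then some (.C, doC c)
  else if canD c then some (.D, doD c)
  else none

def runWord : ℕ → Config → List Move
  | 0, _ => []
  | fuel + 1, c =>
    match step c with
    | none => []
    | some (m, c') => m :: runWord fuel c'

def run : ℕ → Config → Config
  | 0, c => c
  | fuel + 1, c =>
    match step c with
    | none => c
    | some (_, c') => run fuel c'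

def initConfig (p : List ℕ) : Config := ⟨p, [], [], [], []⟩

/-- The 3-stack word of `p`: the sequence of moves of the greedy algorithm on `p`. -/
def stackWord (p : List ℕ) : List Move := runWord (4 * p.length) (initConfig p)

/-- The output of the greedy 3-stack sorting algorithm on `p`. -/
def output3 (p : List ℕ) : List ℕ := (run (4 * p.length) (initConfig p)).out

/-!
Every move of the greedy algorithm keeps `S₁` and `S₂` increasing, so each forbidden factor
reduces to a forbidden prefix of a run started from such a configuration. A second `B` (or `C`)
would put the next entry of the stack onto a smaller one. In `BAB`, the `A` was not allowed before
the first `B`, so the entry it brings onto `S₁` is at least the entry that `B` put onto `S₂`.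
In `C B Aʲ C`, choosing `C` over `B` means the top of `S₁` is at least the top of `S₂`; after
`C B` the same comparison holds between the tops of `S₂` and `S₃`, and `A` moves touch neither.
-/

lemma step_eq_some_A {c c' : Config} (h : step c = some (.A, c')) :
    canA c = true ∧ c' = doA c := by
  unfold step at h
  split_ifs at h <;> simp_all

lemma step_eq_some_B {c c' : Config} (h : step c = some (.B, c')) :
    canA c = false ∧ canB c = true ∧ c' = doB c := by
  unfold step at h
  split_ifs at h <;> simp_all

lemma step_eq_some_C {c c' : Config} (h : step c = some (.C, c')) :
    canA c = false ∧ canB c = false ∧ canC c = true ∧ c' = doC c := by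
  unfold step at h
  split_ifs at h <;> simp_all

lemma step_eq_some_D {c c' : Config} (h : step c = some (.D, c')) : c' = doD c := by
  unfold step at h
  split_ifs at h <;> simp_all

lemma runWord_succ (fuel : ℕ) (c : Config) :
    runWord (fuel + 1) c = ((step c).map fun mc => mc.1 :: runWord fuel mc.2).getD [] := by
  rw [runWord]; rcases step c with _ | ⟨m, c'⟩ <;> rfl

lemma exists_step_of_cons_prefix_runWord {fuel : ℕ} {c : Config} {m : Move} {w : List Move}
    (h : m :: w <+: runWord fuel c) :
    ∃ f c', step c = some (m, c') ∧ w <+: runWord f c' := by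
  cases fuel with
  | zero => simp [runWord] at h
  | succ f =>
    rcases hs : step c with _ | ⟨m', c'⟩ <;> simp only [runWord_succ, hs, Option.map_none,
      Option.map_some, Option.getD_none, Option.getD_some, List.cons_prefix_cons] at h
    · simp at h
    · obtain ⟨rfl, hw⟩ := h
      exact ⟨f, c', rfl, hw⟩

lemma not_infix_runWord {I : Config → Prop}
    (hI : ∀ {c m c'}, step c = some (m, c') → I c → I c') {w : List Move}
    (hw : ∀ fuel c, I c → ¬ w <+: runWord fuel c) :
    ∀ fuel c, I c → ¬ w <:+: runWord fuel c := by
  intro fuel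
  induction fuel with
  | zero => intro c hc h; exact hw 0 c hc (by simpa [runWord] using h)
  | succ f ih =>
    intro c hc h
    rcases hs : step c with _ | ⟨m, c'⟩ <;> rw [runWord_succ, hs] at h
    · exact hw 0 c hc (by simpa [runWord] using h)
    · rcases List.infix_cons_iff.mp h with h | h
      · exact hw (f + 1) c hc (by rwa [runWord_succ, hs])
      · exact ih c' (hI hs hc) h

def StacksIncreasing (c : Config) : Prop :=
  c.s1.IsChain (· < ·) ∧ c.s2.IsChain (· < ·)

lemma StacksIncreasing.step {c c' : Config} {m : Move} (h : step c = some (m, c'))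
    (hc : StacksIncreasing c) : StacksIncreasing c' := by
  obtain ⟨h1, h2⟩ := hc
  cases m
  · obtain ⟨hA, rfl⟩ := step_eq_some_A h
    refine ⟨?_, h2⟩
    rcases hi : c.input with _ | ⟨x, _⟩ <;> rcases hs : c.s1 with _ | ⟨t, _⟩ <;>
      simp_all [canA, doA]
  · obtain ⟨-, hB, rfl⟩ := step_eq_some_B h
    refine ⟨h1.tail, ?_⟩
    rcases hs : c.s1 with _ | ⟨x, _⟩ <;> rcases hs' : c.s2 with _ | ⟨t, _⟩ <;>
      simp_all [canB, doB]
  · obtain ⟨-, -, -, rfl⟩ := step_eq_some_C h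
    exact ⟨h1, h2.tail⟩
  · obtain rfl := step_eq_some_D h
    exact ⟨h1, h2⟩

lemma canB_doB_eq_false {c : Config} (h : c.s1.IsChain (· < ·)) : canB (doB c) = false := by
  rcases hs : c.s1 with _ | ⟨x, _ | ⟨y, _⟩⟩ <;> simp_all [canB, doB, le_of_lt]

lemma canC_doC_eq_false {c : Config} (h : c.s2.IsChain (· < ·)) : canC (doC c) = false := by
  rcases hs : c.s2 with _ | ⟨x, _ | ⟨y, _⟩⟩ <;> simp_all [canC, doC, le_of_lt]

-- `hA'` rules out an empty input, from which `doA` would push the default entry `0`.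
lemma canB_doA_doB_eq_false {c : Config} (hA : canA c = false) (hA' : canA (doB c) = true) :
    canB (doA (doB c)) = false := by
  rcases hi : c.input with _ | ⟨x, _⟩ <;> rcases hs : c.s1 with _ | ⟨t, _⟩ <;>
    simp_all [canA, canB, doA, doB]

lemma canC_doB_doC_eq_false {c : Config} (hB : canB c = false) (hB' : canB (doC c) = true) :
    canC (doB (doC c)) = false := by
  rcases hs : c.s1 with _ | ⟨t, _⟩ <;> rcases hs' : c.s2 with _ | ⟨u, _⟩ <;>
    simp_all [canB, canC, doB, doC]

lemma canC_doA (c : Config) : canC (doA c) = canC c := rfl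

lemma not_replicate_A_append_C_prefix_runWord {c : Config} (hC : canC c = false) (j : ℕ)
    {fuel : ℕ} {rest : List Move} :
    ¬ List.replicate j Move.A ++ Move.C :: rest <+: runWord fuel c := by
  induction j generalizing c fuel with
  | zero =>
    intro h
    obtain ⟨_, _, hs, -⟩ := exists_step_of_cons_prefix_runWord h
    simp [(step_eq_some_C hs).2.2.1] at hC
  | succ j ih =>
    intro h
    obtain ⟨f, c', hs, h'⟩ := exists_step_of_cons_prefix_runWord h
    obtain ⟨-, rfl⟩ := step_eq_some_A hs
    exact ih (by rwa [canC_doA]) h'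

lemma not_BB_prefix_runWord {c : Config} (h : c.s1.IsChain (· < ·)) {fuel : ℕ} :
    ¬ [Move.B, Move.B] <+: runWord fuel c := by
  intro hw
  obtain ⟨_, _, hs, hw⟩ := exists_step_of_cons_prefix_runWord hw
  obtain ⟨-, -, rfl⟩ := step_eq_some_B hs
  obtain ⟨_, _, hs, -⟩ := exists_step_of_cons_prefix_runWord hw
  simpa [canB_doB_eq_false h] using (step_eq_some_B hs).2.1

lemma not_CC_prefix_runWord {c : Config} (h : c.s2.IsChain (· < ·)) {fuel : ℕ} :
    ¬ [Move.C, Move.C] <+: runWord fuel c := by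
  intro hw
  obtain ⟨_, _, hs, hw⟩ := exists_step_of_cons_prefix_runWord hw
  obtain ⟨-, -, -, rfl⟩ := step_eq_some_C hs
  obtain ⟨_, _, hs, -⟩ := exists_step_of_cons_prefix_runWord hw
  simpa [canC_doC_eq_false h] using (step_eq_some_C hs).2.2.1

lemma not_BAB_prefix_runWord {c : Config} {fuel : ℕ} :
    ¬ [Move.B, Move.A, Move.B] <+: runWord fuel c := by
  intro hw
  obtain ⟨_, _, hs, hw⟩ := exists_step_of_cons_prefix_runWord hw
  obtain ⟨hA, -, rfl⟩ := step_eq_some_B hs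
  obtain ⟨_, _, hs, hw⟩ := exists_step_of_cons_prefix_runWord hw
  obtain ⟨hA', rfl⟩ := step_eq_some_A hs
  obtain ⟨_, _, hs, -⟩ := exists_step_of_cons_prefix_runWord hw
  simpa [canB_doA_doB_eq_false hA hA'] using (step_eq_some_B hs).2.1

lemma not_CBAC_prefix_runWord {c : Config} (j : ℕ) {fuel : ℕ} :
    ¬ [Move.C, Move.B] ++ List.replicate j Move.A ++ [Move.C] <+: runWord fuel c := by
  intro hw
  simp only [List.cons_append, List.nil_append] at hw
  obtain ⟨_, _, hs, hw⟩ := exists_step_of_cons_prefix_runWord hw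
  obtain ⟨-, hB, -, rfl⟩ := step_eq_some_C hs
  obtain ⟨_, _, hs, hw⟩ := exists_step_of_cons_prefix_runWord hw
  obtain ⟨-, hB', rfl⟩ := step_eq_some_B hs
  exact not_replicate_A_append_C_prefix_runWord (canC_doB_doC_eq_false hB hB') j hw

theorem stmt_18_general (p : List ℕ) :
    ¬ ([Move.B, Move.B] <:+: stackWord p) ∧
    ¬ ([Move.C, Move.C] <:+: stackWord p) ∧
    ¬ ([Move.B, Move.A, Move.B] <:+: stackWord p) ∧
    ∀ j : ℕ, ¬ (([Move.C, Move.B] ++ List.replicate j Move.A ++ [Move.C])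
        <:+: stackWord p) := by
  have hinit : StacksIncreasing (initConfig p) := ⟨.nil, .nil⟩
  refine ⟨?_, ?_, ?_, fun j => ?_⟩ <;>
    refine not_infix_runWord (fun hs hc => StacksIncreasing.step hs hc) ?_ _ _ hinit
  · exact fun _ _ hc => not_BB_prefix_runWord hc.1
  · exact fun _ _ hc => not_CC_prefix_runWord hc.2
  · exact fun _ _ _ => not_BAB_prefix_runWord
  · exact fun _ _ _ => not_CBAC_prefix_runWord j

/-- In the 3-stack word of any permutation there is no factor `BB`, no factor
`CC`, no factor `BAB`, and no factor `C B Aʲ C` for any `j ≥ 0`. -/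
theorem stmt_18 (n : ℕ) (p : List ℕ) (hp : p.Perm (List.range' 1 n)) :
    ¬ ([Move.B, Move.B] <:+: stackWord p) ∧
    ¬ ([Move.C, Move.C] <:+: stackWord p) ∧
    ¬ ([Move.B, Move.A, Move.B] <:+: stackWord p) ∧
    ∀ j : ℕ, ¬ (([Move.C, Move.B] ++ List.replicate j Move.A ++ [Move.C])
        <:+: stackWord p) :=
  stmt_18_general p
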